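/- In the tight instance with products C = {(i,j) : i ∈ [k], j ∈ [i]}, revenues r((i,j)) = ε^{−j}, and choice probabilities P((i,j),S) = ε^i if no (i,j') ∈ S with j' < j and 0 otherwise (0 < ε ≤ 1/2): every revenue-ordered assortment has revenue strictly less than 1/(1−ε), while the assortment {(i,i) : i ∈ [k]} has revenue exactly k. -/

import Mathlib

/-!
Under this choice rule only the cheapest offered product of each nest `i` is bought, with
probability `ε ^ i`. In `S_j` that product is `(i, j)` for every `i ≥ j`, so the revenue is the
geometric tail `∑_{i=j}^{k} ε^{i-j} < 1 / (1 - ε)`; in the diagonal assortment every nest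
contributes `ε ^ i · ε^{-i} = 1`.
-/

open Finset

lemma geom_sum_Icc_lt_of_lt_one {x : ℝ} (hx0 : 0 < x) (hx1 : x < 1) (m n : ℕ) :
    ∑ i ∈ Icc m n, x ^ i < x ^ m / (1 - x) := by
  have hbound : 0 < x ^ m / (1 - x) := div_pos (pow_pos hx0 m) (sub_pos.2 hx1)
  rcases le_or_gt m (n + 1) with hmn | hmn
  · calc ∑ i ∈ Icc m n, x ^ i
        < ∑ i ∈ Icc m n, x ^ i + x ^ (n + 1) := lt_add_of_pos_right _ (pow_pos hx0 _)
      _ = ∑ i ∈ Ico m (n + 1 + 1), x ^ i := by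
          rw [← sum_Icc_succ_top hmn, Ico_add_one_right_eq_Icc]
      _ ≤ x ^ m / (1 - x) := geom_sum_Ico_le_of_lt_one hx0.le hx1
  · rwa [Icc_eq_empty_of_lt (by omega), sum_empty]

/-- The revenue-ordered assortment `S_j` of the paper. -/
def revenueOrdered (k j : ℕ) : Finset (ℕ × ℕ) :=
  (Icc 1 k ×ˢ Icc 1 k).filter (fun p => p.2 ≤ p.1 ∧ j ≤ p.2)

def diagonalAssortment (k : ℕ) : Finset (ℕ × ℕ) :=
  (Icc 1 k ×ˢ Icc 1 k).filter (fun p => p.2 = p.1)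

section ChoiceRule

variable {ε : ℝ} {P : ℕ × ℕ → Finset (ℕ × ℕ) → ℝ}

lemma sum_choice_mul_eq_sum_filter_min
    (hP : ∀ (p : ℕ × ℕ) (S : Finset (ℕ × ℕ)),
      P p S = if p ∈ S ∧ ∀ q ∈ S, q.1 = p.1 → p.2 ≤ q.2 then ε ^ p.1 else 0)
    (S : Finset (ℕ × ℕ)) (f : ℕ × ℕ → ℝ) :
    ∑ p ∈ S, P p S * f p =
      ∑ p ∈ S.filter (fun p => ∀ q ∈ S, q.1 = p.1 → p.2 ≤ q.2), ε ^ p.1 * f p := by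
  rw [sum_filter]
  refine sum_congr rfl fun p hp => ?_
  simp only [hP, hp, true_and, ite_mul, zero_mul]

lemma filter_min_revenueOrdered {k j : ℕ} (hj : 1 ≤ j) :
    (revenueOrdered k j).filter (fun p => ∀ q ∈ revenueOrdered k j, q.1 = p.1 → p.2 ≤ q.2) =
      (Icc j k).image (fun i => (i, j)) := by
  ext ⟨a, b⟩
  rw [mem_filter]
  simp only [revenueOrdered, mem_filter, mem_product, mem_Icc, mem_image, Prod.mk.injEq,
    and_imp, Prod.forall]
  constructor
  · rintro ⟨⟨⟨⟨ha1, hak⟩, hb1, hbk⟩, hba, hjb⟩, hmin⟩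
    have hbj : b ≤ j := hmin a j ha1 hak hj (by omega) (by omega) le_rfl rfl
    exact ⟨a, ⟨by omega, hak⟩, rfl, by omega⟩
  · rintro ⟨i, ⟨hji, hik⟩, rfl, rfl⟩
    exact ⟨⟨⟨⟨by omega, hik⟩, hj, by omega⟩, hji, le_rfl⟩, fun _ _ _ _ _ _ _ hjb _ => hjb⟩

lemma filter_min_diagonalAssortment (k : ℕ) :
    (diagonalAssortment k).filter
        (fun p => ∀ q ∈ diagonalAssortment k, q.1 = p.1 → p.2 ≤ q.2) =
      (Icc 1 k).image (fun i => (i, i)) := by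
  ext ⟨a, b⟩
  rw [mem_filter]
  simp only [diagonalAssortment, mem_filter, mem_product, mem_Icc, mem_image, Prod.mk.injEq,
    and_imp, Prod.forall]
  constructor
  · rintro ⟨⟨⟨ha, -⟩, rfl⟩, -⟩
    exact ⟨b, ha, rfl, rfl⟩
  · rintro ⟨i, hi, rfl, rfl⟩
    exact ⟨⟨⟨hi, hi⟩, rfl⟩, fun _ _ _ _ _ _ _ => by omega⟩

variable (hP : ∀ (p : ℕ × ℕ) (S : Finset (ℕ × ℕ)),
      P p S = if p ∈ S ∧ ∀ q ∈ S, q.1 = p.1 → p.2 ≤ q.2 then ε ^ p.1 else 0)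
include hP

lemma revenue_revenueOrdered {k j : ℕ} (hj : 1 ≤ j) :
    ∑ p ∈ revenueOrdered k j, P p (revenueOrdered k j) * (ε ^ p.2)⁻¹ =
      (∑ i ∈ Icc j k, ε ^ i) * (ε ^ j)⁻¹ := by
  rw [sum_choice_mul_eq_sum_filter_min hP, filter_min_revenueOrdered hj,
    sum_image (fun _ _ _ _ h => congrArg Prod.fst h), sum_mul]

lemma revenue_diagonalAssortment (hε : ε ≠ 0) (k : ℕ) :
    ∑ p ∈ diagonalAssortment k, P p (diagonalAssortment k) * (ε ^ p.2)⁻¹ = k := by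
  rw [sum_choice_mul_eq_sum_filter_min hP, filter_min_diagonalAssortment,
    sum_image (fun _ _ _ _ h => congrArg Prod.fst h)]
  simp [mul_inv_cancel₀ (pow_ne_zero _ hε)]

end ChoiceRule

theorem stmt8_general (k : ℕ) (ε : ℝ) (hε0 : 0 < ε) (hε : ε ≤ 1 / 2)
    (P : ℕ × ℕ → Finset (ℕ × ℕ) → ℝ)
    (hP : ∀ (p : ℕ × ℕ) (S : Finset (ℕ × ℕ)),
      P p S = if p ∈ S ∧ ∀ q ∈ S, q.1 = p.1 → p.2 ≤ q.2 then ε ^ p.1 else 0) :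
    (∀ j ∈ Finset.Icc 1 k,
      ∑ p ∈ ((Finset.Icc 1 k ×ˢ Finset.Icc 1 k).filter
          (fun p => p.2 ≤ p.1 ∧ j ≤ p.2)),
        P p ((Finset.Icc 1 k ×ˢ Finset.Icc 1 k).filter
          (fun p => p.2 ≤ p.1 ∧ j ≤ p.2)) * (ε ^ p.2)⁻¹
        < 1 / (1 - ε)) ∧
    (∑ p ∈ ((Finset.Icc 1 k ×ˢ Finset.Icc 1 k).filter (fun p => p.2 = p.1)),
        P p ((Finset.Icc 1 k ×ˢ Finset.Icc 1 k).filter (fun p => p.2 = p.1))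
          * (ε ^ p.2)⁻¹
        = (k : ℝ)) := by
  have hε1 : ε < 1 := by linarith
  refine ⟨fun j hj => ?_, revenue_diagonalAssortment hP hε0.ne' k⟩
  have hεj : 0 < ε ^ j := pow_pos hε0 j
  calc ∑ p ∈ revenueOrdered k j, P p (revenueOrdered k j) * (ε ^ p.2)⁻¹
      = (∑ i ∈ Icc j k, ε ^ i) * (ε ^ j)⁻¹ := revenue_revenueOrdered hP (mem_Icc.1 hj).1
    _ < ε ^ j / (1 - ε) * (ε ^ j)⁻¹ :=
        mul_lt_mul_of_pos_right (geom_sum_Icc_lt_of_lt_one hε0 hε1 j k) (inv_pos.2 hεj)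
    _ = 1 / (1 - ε) := by field_simp

/-- In the tight instance (products `(i,j)` with `1 ≤ j ≤ i ≤ k`, revenue
`ε^{-j}` for product `(i,j)`, and `P((i,j),S) = ε^i` iff no `(i,j')` with
`j' < j` is in `S`): every revenue-ordered assortment
`S_j = {(i,j') : j' ≥ j}` has revenue strictly less than `1/(1-ε)`, while the
assortment `{(i,i) : i ∈ [k]}` has revenue exactly `k`. -/
theorem stmt8 (k : ℕ) (hk : 1 ≤ k) (ε : ℝ) (hε0 : 0 < ε) (hε : ε ≤ 1 / 2)
    (P : ℕ × ℕ → Finset (ℕ × ℕ) → ℝ)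
    (hP : ∀ (p : ℕ × ℕ) (S : Finset (ℕ × ℕ)),
      P p S = if p ∈ S ∧ ∀ q ∈ S, q.1 = p.1 → p.2 ≤ q.2 then ε ^ p.1 else 0) :
    (∀ j ∈ Finset.Icc 1 k,
      ∑ p ∈ ((Finset.Icc 1 k ×ˢ Finset.Icc 1 k).filter
          (fun p => p.2 ≤ p.1 ∧ j ≤ p.2)),
        P p ((Finset.Icc 1 k ×ˢ Finset.Icc 1 k).filter
          (fun p => p.2 ≤ p.1 ∧ j ≤ p.2)) * (ε ^ p.2)⁻¹
        < 1 / (1 - ε)) ∧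
    (∑ p ∈ ((Finset.Icc 1 k ×ˢ Finset.Icc 1 k).filter (fun p => p.2 = p.1)),
        P p ((Finset.Icc 1 k ×ˢ Finset.Icc 1 k).filter (fun p => p.2 = p.1))
          * (ε ^ p.2)⁻¹
        = (k : ℝ)) :=
  stmt8_general k ε hε0 hε P hP
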